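/- Let β = 1 + η with η ∈ [0,1), and let ℓ be a Lévy measure on ℝ satisfying sup_{r∈(0,1)} r^β ℓ({x : r < |x| ≤ 1}) ≤ c < ∞. Then there is a constant c_β > 0 depending only on β such that for all r ∈ (0,1]: r^β ∫_{|x| ≤ 1} (|x/r|² ∧ |x/r|^β) dℓ(x) ≤ c_β · c · max{1, log₂(1/r)}. -/

import Mathlib

open MeasureTheory Set
open scoped ENNReal

/-!
Cut `{‖x‖ ≤ 1} \ {0}` into the dyadic shells `2⁻ᵏ⁻¹ < ‖x‖ ≤ 2⁻ᵏ`. The tail bound gives the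
`k`-th shell mass at most `c 2^{(k+1)β}`, and there the integrand is at most `φ(2⁻ᵏ / r)` with
`φ(t) = t² ∧ t^β` (`sqMinRpow β`); so after multiplying by `r^β` the shell contributes at most
`2^β c min ((r 2ᵏ)^{β-2}, 1)`. The `⌈log₂ (1/r)⌉` shells with `r 2ᵏ < 1` contribute `O(c)` each,
and the remaining ones form a geometric series of ratio `2^{β-2} < 1`.
-/

noncomputable def sqMinRpow (β t : ℝ) : ℝ := min (t ^ 2) (t ^ β)

lemma sqMinRpow_nonneg (β : ℝ) {t : ℝ} (ht : 0 ≤ t) : 0 ≤ sqMinRpow β t :=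
  le_min (by positivity) (Real.rpow_nonneg ht β)

lemma sqMinRpow_le_sqMinRpow {β s t : ℝ} (hβ : 0 ≤ β) (hs : 0 ≤ s) (hst : s ≤ t) :
    sqMinRpow β s ≤ sqMinRpow β t :=
  min_le_min (pow_le_pow_left₀ hs hst 2) (Real.rpow_le_rpow hs hst hβ)

lemma rpow_mul_sqMinRpow_inv (β : ℝ) {s : ℝ} (hs : 0 < s) :
    s ^ β * sqMinRpow β s⁻¹ = min (s ^ (β - 2)) 1 := by
  rw [sqMinRpow, mul_min_of_nonneg _ _ (Real.rpow_nonneg hs.le β), Real.inv_rpow hs.le,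
    mul_inv_cancel₀ (Real.rpow_pos_of_pos hs β).ne', Real.rpow_sub hs, inv_pow,
    ← Real.rpow_natCast, div_eq_mul_inv, Nat.cast_ofNat]

lemma exists_nat_one_le_mul_two_pow {r : ℝ} (hr0 : 0 < r) (hr1 : r ≤ 1) :
    ∃ N : ℕ, 1 ≤ r * 2 ^ N ∧ (N : ℝ) < Real.logb 2 (1 / r) + 1 := by
  have hlog : 0 ≤ Real.logb 2 (1 / r) :=
    Real.logb_nonneg one_lt_two (one_le_one_div hr0 hr1)
  refine ⟨⌈Real.logb 2 (1 / r)⌉₊, ?_, Nat.ceil_lt_add_one hlog⟩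
  have h := (Real.logb_le_iff_le_rpow one_lt_two (by positivity)).1
    (Nat.le_ceil (Real.logb 2 (1 / r)))
  rw [Real.rpow_natCast, div_le_iff₀ hr0] at h
  linarith

lemma tsum_ofReal_min_rpow_le {r p : ℝ} (hp : p < 0) {N : ℕ} (hN : 1 ≤ r * 2 ^ N) :
    ∑' k : ℕ, ENNReal.ofReal (min ((r * 2 ^ k) ^ p) 1) ≤
      ENNReal.ofReal (N + (1 - (2 : ℝ) ^ p)⁻¹) := by
  set q : ℝ := (2 : ℝ) ^ p
  have hq0 : 0 < q := Real.rpow_pos_of_pos two_pos p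
  have hq1 : q < 1 := Real.rpow_lt_one_of_one_lt_of_neg one_lt_two hp
  have head : ∑ k ∈ Finset.range N, ENNReal.ofReal (min ((r * 2 ^ k) ^ p) 1) ≤ N := by
    simpa using Finset.sum_le_card_nsmul (Finset.range N) _ 1
      fun k _ ↦ ENNReal.ofReal_le_one.2 (min_le_right _ _)
  have tail_term (j : ℕ) : min ((r * 2 ^ (j + N)) ^ p) 1 ≤ q ^ j := by
    have h2j : (2 : ℝ) ^ j ≤ r * 2 ^ (j + N) := by
      rw [pow_add, mul_left_comm]
      exact le_mul_of_one_le_right (by positivity) hN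
    calc min ((r * 2 ^ (j + N)) ^ p) 1 ≤ ((2 : ℝ) ^ j) ^ p :=
          (min_le_left _ _).trans (Real.rpow_le_rpow_of_nonpos (by positivity) h2j hp.le)
      _ = q ^ j := (Real.rpow_pow_comm zero_le_two p j).symm
  have tail : ∑' j : ℕ, ENNReal.ofReal (min ((r * 2 ^ (j + N)) ^ p) 1) ≤
      ENNReal.ofReal (1 - q)⁻¹ :=
    calc _ ≤ ∑' j : ℕ, ENNReal.ofReal q ^ j := ENNReal.tsum_le_tsum fun j ↦ by
          rw [← ENNReal.ofReal_pow hq0.le]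
          exact ENNReal.ofReal_le_ofReal (tail_term j)
      _ = ENNReal.ofReal (1 - q)⁻¹ := by
          rw [ENNReal.tsum_geometric, ENNReal.ofReal_inv_of_pos (by linarith),
            ENNReal.ofReal_sub _ hq0.le, ENNReal.ofReal_one]
  rw [← ENNReal.summable.sum_add_tsum_nat_add' (k := N),
    ENNReal.ofReal_add (Nat.cast_nonneg N) (inv_nonneg.2 (by linarith)), ENNReal.ofReal_natCast]
  exact add_le_add head tail

def dyadicShell {E : Type*} [Norm E] (k : ℕ) : Set E :=
  {x | (2 ^ (k + 1) : ℝ)⁻¹ < ‖x‖ ∧ ‖x‖ ≤ (2 ^ k : ℝ)⁻¹}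

def HasTailBound {E : Type*} [Norm E] [MeasurableSpace E] (μ : Measure E) (β c : ℝ) : Prop :=
  ∀ r ∈ Ioo (0 : ℝ) 1, ENNReal.ofReal (r ^ β) * μ {x | r < ‖x‖ ∧ ‖x‖ ≤ 1} ≤ ENNReal.ofReal c

section DyadicShell

variable {E : Type*} [NormedAddCommGroup E]

lemma setOf_norm_le_one_subset_iUnion_dyadicShell :
    {x : E | ‖x‖ ≤ 1} ⊆ {0} ∪ ⋃ k, dyadicShell k := by
  intro x hx
  rcases eq_or_ne x 0 with rfl | hx0
  · exact Or.inl rfl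
  obtain ⟨k, hk⟩ := exists_nat_pow_near_of_lt_one (norm_pos_iff.2 hx0) hx
    (by norm_num : (0 : ℝ) < 2⁻¹) (by norm_num)
  rw [inv_pow, inv_pow] at hk
  exact Or.inr (mem_iUnion.2 ⟨k, hk⟩)

variable [MeasurableSpace E] {μ : Measure E}

lemma setLIntegral_norm_le_one_le_tsum_dyadicShell (hμ : μ {0} = 0) (f : E → ℝ≥0∞) :
    ∫⁻ x in {x | ‖x‖ ≤ 1}, f x ∂μ ≤ ∑' k, ∫⁻ x in dyadicShell k, f x ∂μ :=
  calc ∫⁻ x in {x | ‖x‖ ≤ 1}, f x ∂μ ≤ ∫⁻ x in {0} ∪ ⋃ k, dyadicShell k, f x ∂μ :=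
        lintegral_mono_set setOf_norm_le_one_subset_iUnion_dyadicShell
    _ ≤ (∫⁻ x in {0}, f x ∂μ) + ∫⁻ x in ⋃ k, dyadicShell k, f x ∂μ := lintegral_union_le _ _ _
    _ = ∫⁻ x in ⋃ k, dyadicShell k, f x ∂μ := by rw [setLIntegral_measure_zero _ _ hμ, zero_add]
    _ ≤ ∑' k, ∫⁻ x in dyadicShell k, f x ∂μ := lintegral_iUnion_le _ _

variable {β c : ℝ}

lemma measure_dyadicShell_le (hμ : HasTailBound μ β c) (k : ℕ) :
    μ (dyadicShell k) ≤ ENNReal.ofReal (c * (2 ^ (k + 1)) ^ β) := by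
  set ρ : ℝ := (2 ^ (k + 1))⁻¹
  have hρ0 : 0 < ρ := by positivity
  have hρ1 : ρ < 1 := inv_lt_one_of_one_lt₀ (one_lt_pow₀ one_lt_two k.succ_ne_zero)
  have hρβ : 0 < ρ ^ β := Real.rpow_pos_of_pos hρ0 β
  have hsub : dyadicShell k ⊆ {x : E | ρ < ‖x‖ ∧ ‖x‖ ≤ 1} :=
    fun x hx ↦ ⟨hx.1, hx.2.trans (inv_le_one_of_one_le₀ (one_le_pow₀ one_le_two))⟩
  calc μ (dyadicShell k) ≤ μ {x : E | ρ < ‖x‖ ∧ ‖x‖ ≤ 1} := measure_mono hsub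
    _ ≤ ENNReal.ofReal c / ENNReal.ofReal (ρ ^ β) := by
        rw [ENNReal.le_div_iff_mul_le (Or.inl (ENNReal.ofReal_pos.2 hρβ).ne')
          (Or.inl ENNReal.ofReal_ne_top), mul_comm]
        exact hμ ρ ⟨hρ0, hρ1⟩
    _ = ENNReal.ofReal (c * (2 ^ (k + 1)) ^ β) := by
        rw [← ENNReal.ofReal_div_of_pos hρβ, Real.inv_rpow (by positivity), div_inv_eq_mul]

lemma rpow_mul_setLIntegral_dyadicShell_le (hμ : HasTailBound μ β c) (hβ : 0 ≤ β) {r : ℝ}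
    (hr : 0 < r) (k : ℕ) :
    ENNReal.ofReal (r ^ β) * ∫⁻ x in dyadicShell k, ENNReal.ofReal (sqMinRpow β (‖x‖ / r)) ∂μ ≤
      ENNReal.ofReal (2 ^ β * c * min ((r * 2 ^ k) ^ (β - 2)) 1) := by
  set s : ℝ := r * 2 ^ k
  have hs : 0 < s := by positivity
  have hbound : ∀ x ∈ (dyadicShell k : Set E),
      ENNReal.ofReal (sqMinRpow β (‖x‖ / r)) ≤ ENNReal.ofReal (sqMinRpow β s⁻¹) := by
    intro x hx
    refine ENNReal.ofReal_le_ofReal (sqMinRpow_le_sqMinRpow hβ (by positivity) ?_)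
    rw [mul_inv, ← div_eq_inv_mul]
    exact div_le_div_of_nonneg_right hx.2 hr.le
  have key : r ^ β * (sqMinRpow β s⁻¹ * (c * (2 ^ (k + 1)) ^ β)) =
      2 ^ β * c * min (s ^ (β - 2)) 1 := by
    rw [← rpow_mul_sqMinRpow_inv β hs, pow_succ, Real.mul_rpow (by positivity) zero_le_two,
      Real.mul_rpow hr.le (by positivity)]
    ring
  calc ENNReal.ofReal (r ^ β) * ∫⁻ x in dyadicShell k, ENNReal.ofReal (sqMinRpow β (‖x‖ / r)) ∂μ
      ≤ ENNReal.ofReal (r ^ β) * (ENNReal.ofReal (sqMinRpow β s⁻¹) * μ (dyadicShell k)) := by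
        gcongr
        exact (setLIntegral_mono measurable_const hbound).trans_eq (setLIntegral_const _ _)
    _ ≤ ENNReal.ofReal (r ^ β) *
          (ENNReal.ofReal (sqMinRpow β s⁻¹) * ENNReal.ofReal (c * (2 ^ (k + 1)) ^ β)) := by
        gcongr
        exact measure_dyadicShell_le hμ k
    _ = ENNReal.ofReal (2 ^ β * c * min (s ^ (β - 2)) 1) := by
        rw [← ENNReal.ofReal_mul (sqMinRpow_nonneg β (by positivity)),
          ← ENNReal.ofReal_mul (by positivity), key]

lemma rpow_mul_setLIntegral_norm_le_one_le_tsum (hμ0 : μ {0} = 0) (hμ : HasTailBound μ β c)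
    (hβ : 0 ≤ β) {r : ℝ} (hr : 0 < r) :
    ENNReal.ofReal (r ^ β) * ∫⁻ x in {x | ‖x‖ ≤ 1}, ENNReal.ofReal (sqMinRpow β (‖x‖ / r)) ∂μ ≤
      ENNReal.ofReal (2 ^ β * c) * ∑' k : ℕ, ENNReal.ofReal (min ((r * 2 ^ k) ^ (β - 2)) 1) :=
  calc _ ≤ ENNReal.ofReal (r ^ β) *
        ∑' k, ∫⁻ x in dyadicShell k, ENNReal.ofReal (sqMinRpow β (‖x‖ / r)) ∂μ := by
        gcongr
        exact setLIntegral_norm_le_one_le_tsum_dyadicShell hμ0 _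
    _ ≤ ∑' k : ℕ, ENNReal.ofReal (2 ^ β * c * min ((r * 2 ^ k) ^ (β - 2)) 1) := by
        rw [← ENNReal.tsum_mul_left]
        exact ENNReal.tsum_le_tsum (rpow_mul_setLIntegral_dyadicShell_le hμ hβ hr)
    _ = _ := by
        rw [← ENNReal.tsum_mul_left]
        exact tsum_congr fun k ↦ ENNReal.ofReal_mul' (le_min (by positivity) zero_le_one)

end DyadicShell

theorem stmt_12 (η : ℝ) (hη : η ∈ Set.Ico (0 : ℝ) 1) :
    ∃ cβ : ℝ, 0 < cβ ∧
      ∀ (ℓ : Measure ℝ), ℓ {(0 : ℝ)} = 0 →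
        (∫⁻ x, ENNReal.ofReal (min (x ^ 2) 1) ∂ℓ ≠ ⊤) →
        ∀ c : ℝ, 0 ≤ c →
        (∀ r : ℝ, r ∈ Set.Ioo (0 : ℝ) 1 →
          ENNReal.ofReal (r ^ (1 + η)) * ℓ {x : ℝ | r < |x| ∧ |x| ≤ 1}
            ≤ ENNReal.ofReal c) →
        ∀ r : ℝ, r ∈ Set.Ioc (0 : ℝ) 1 →
          ENNReal.ofReal (r ^ (1 + η)) *
            ∫⁻ x in {x : ℝ | |x| ≤ 1},
              ENNReal.ofReal (min (|x / r| ^ 2) (|x / r| ^ (1 + η))) ∂ℓ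
            ≤ ENNReal.ofReal (cβ * c * max 1 (Real.logb 2 (1 / r))) := by
  obtain ⟨hη0, hη1⟩ := hη
  set C : ℝ := (1 - (2 : ℝ) ^ (1 + η - 2))⁻¹
  have hC : 0 < C :=
    inv_pos.2 (sub_pos.2 (Real.rpow_lt_one_of_one_lt_of_neg one_lt_two (by linarith)))
  refine ⟨2 ^ (1 + η) * (2 + C), by positivity, ?_⟩
  intro ℓ hℓ0 _ c hc hℓ r ⟨hr0, hr1⟩
  obtain ⟨N, hN, hNlog⟩ := exists_nat_one_le_mul_two_pow hr0 hr1
  set L := max 1 (Real.logb 2 (1 / r))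
  have hNC : (N : ℝ) + C ≤ (2 + C) * L := by
    nlinarith [le_max_left 1 (Real.logb 2 (1 / r)), le_max_right 1 (Real.logb 2 (1 / r))]
  -- after this rewrite the integrand is `sqMinRpow (1 + η) (‖x‖ / r)` up to unfolding
  simp only [abs_div, abs_of_pos hr0]
  calc _ ≤ ENNReal.ofReal (2 ^ (1 + η) * c) *
        ∑' k : ℕ, ENNReal.ofReal (min ((r * 2 ^ k) ^ (1 + η - 2)) 1) :=
        rpow_mul_setLIntegral_norm_le_one_le_tsum hℓ0 hℓ (by linarith) hr0
    _ ≤ ENNReal.ofReal (2 ^ (1 + η) * c) * ENNReal.ofReal (N + C) := by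
        gcongr
        exact tsum_ofReal_min_rpow_le (by linarith) hN
    _ ≤ ENNReal.ofReal (2 ^ (1 + η) * (2 + C) * c * L) := by
        rw [← ENNReal.ofReal_mul (by positivity)]
        refine ENNReal.ofReal_le_ofReal ?_
        calc 2 ^ (1 + η) * c * (N + C) ≤ 2 ^ (1 + η) * c * ((2 + C) * L) := by gcongr
          _ = 2 ^ (1 + η) * (2 + C) * c * L := by ring
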